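/- The vacuum vector δ_e is cyclic for the von Neumann algebra M generated by the semicircular elements L_j + L_j*: the set {a δ_e : a ∈ M} is dense in H. -/
import Mathlib


noncomputable section

/-- The Hilbert space `ℓ²(FreeMonoid (Fin N), ℂ)`. -/
abbrev FMH (N : ℕ) : Type := lp (fun _ : FreeMonoid (Fin N) => ℂ) 2

/-- The standard orthonormal basis vector `δ_w` at the word `w`. -/
noncomputable def delta (N : ℕ) (w : FreeMonoid (Fin N)) : FMH N :=
  letI : DecidableEq (FreeMonoid (Fin N)) := Classical.decEq _
  lp.single 2 w 1

/-- The set of the semicircular generators `L_j + L_j*`, `j = 1, …, N`. -/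
def semicircSet (N : ℕ) (L : FreeMonoid (Fin N) → (FMH N →L[ℂ] FMH N)) :
    Set (FMH N →L[ℂ] FMH N) :=
  {x | ∃ j : Fin N, x = L (FreeMonoid.of j) + ContinuousLinearMap.adjoint (L (FreeMonoid.of j))}

/-- The von Neumann algebra generated by `{L_j + L_j*}`: the double commutant of this
(self-adjoint) set inside the bounded operators on `H`. -/
def vnAlg (N : ℕ) (L : FreeMonoid (Fin N) → (FMH N →L[ℂ] FMH N)) :
    StarSubalgebra ℂ (FMH N →L[ℂ] FMH N) :=
  StarSubalgebra.centralizer ℂ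
    ((StarSubalgebra.centralizer ℂ (semicircSet N L) : StarSubalgebra ℂ (FMH N →L[ℂ] FMH N)) :
      Set (FMH N →L[ℂ] FMH N))

open scoped ComplexInnerProductSpace

theorem inner_delta_left (N : ℕ) (w : FreeMonoid (Fin N)) (x : FMH N) :
    ⟪delta N w, x⟫ = x w := by
  letI : DecidableEq (FreeMonoid (Fin N)) := Classical.decEq _
  rw [delta, lp.inner_single_left]
  simp [RCLike.inner_apply]

theorem delta_apply_self (N : ℕ) (w : FreeMonoid (Fin N)) : delta N w w = 1 := by
  letI : DecidableEq (FreeMonoid (Fin N)) := Classical.decEq _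
  rw [delta]; exact lp.single_apply_self 2 w 1

theorem delta_apply_ne (N : ℕ) {w k : FreeMonoid (Fin N)} (h : k ≠ w) : delta N w k = 0 := by
  letI : DecidableEq (FreeMonoid (Fin N)) := Classical.decEq _
  rw [delta]; exact lp.single_apply_ne 2 w 1 h

theorem lp_ext' (N : ℕ) {x y : FMH N} (h : ∀ w, ⟪delta N w, x⟫ = ⟪delta N w, y⟫) : x = y := by
  apply lp.ext
  funext w
  simpa [inner_delta_left] using h w

section adj

variable (N : ℕ) (L : FreeMonoid (Fin N) → (FMH N →L[ℂ] FMH N))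
  (hL : ∀ w h : FreeMonoid (Fin N), L w (delta N h) = delta N (w * h))

include hL

theorem adjL_coord (j : Fin N) (h k : FreeMonoid (Fin N)) :
    ⟪delta N k, ContinuousLinearMap.adjoint (L (FreeMonoid.of j)) (delta N h)⟫
      = delta N h (FreeMonoid.of j * k) := by
  rw [ContinuousLinearMap.adjoint_inner_right, hL, inner_delta_left]

theorem adjL_one (j : Fin N) :
    ContinuousLinearMap.adjoint (L (FreeMonoid.of j)) (delta N 1) = 0 := by
  apply lp_ext'
  intro k
  rw [adjL_coord N L hL]
  have : FreeMonoid.of j * k ≠ 1 := by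
    intro hc
    have := congrArg FreeMonoid.toList hc
    simp [FreeMonoid.toList_of_mul] at this
  rw [delta_apply_ne N this]
  simp

theorem adjL_cons_same (j : Fin N) (t : FreeMonoid (Fin N)) :
    ContinuousLinearMap.adjoint (L (FreeMonoid.of j)) (delta N (FreeMonoid.of j * t))
      = delta N t := by
  apply lp_ext'
  intro k
  rw [adjL_coord N L hL, inner_delta_left]
  by_cases hk : k = t
  · subst hk; rw [delta_apply_self, delta_apply_self]
  · rw [delta_apply_ne N hk, delta_apply_ne N]
    intro hc
    have := congrArg FreeMonoid.toList hc
    simp [FreeMonoid.toList_of_mul] at this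
    exact hk this

theorem adjL_cons_ne {i j : Fin N} (hij : i ≠ j) (t : FreeMonoid (Fin N)) :
    ContinuousLinearMap.adjoint (L (FreeMonoid.of j)) (delta N (FreeMonoid.of i * t)) = 0 := by
  apply lp_ext'
  intro k
  rw [adjL_coord N L hL]
  rw [delta_apply_ne N]
  · simp
  · intro hc
    have := congrArg FreeMonoid.toList hc
    simp [FreeMonoid.toList_of_mul] at this
    exact hij this.1.symm

theorem gen_mem_vnAlg (j : Fin N) :
    L (FreeMonoid.of j) + ContinuousLinearMap.adjoint (L (FreeMonoid.of j)) ∈ vnAlg N L :=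
  StarAlgebra.adjoin_le_centralizer_centralizer ℂ (semicircSet N L)
    (StarAlgebra.subset_adjoin ℂ _ ⟨j, rfl⟩)

theorem delta_mem_key : ∀ n : ℕ, ∀ w : FreeMonoid (Fin N), w.length ≤ n →
    ∃ a ∈ vnAlg N L, a (delta N 1) = delta N w := by
  intro n
  induction n with
  | zero =>
    intro w hw
    have hw1 : w = 1 := by
      apply FreeMonoid.toList.injective
      have : (FreeMonoid.toList w).length = 0 := Nat.le_zero.mp hw
      simpa using List.length_eq_zero_iff.mp this
    exact ⟨1, one_mem _, by simp [hw1]⟩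
  | succ n ih =>
    intro w hw
    cases hwl : FreeMonoid.toList w with
    | nil =>
      have hw1 : w = 1 := FreeMonoid.toList.injective (by simp [hwl])
      exact ⟨1, one_mem _, by simp [hw1]⟩
    | cons i t =>
      have hweq : w = FreeMonoid.of i * FreeMonoid.ofList t := by
        apply FreeMonoid.toList.injective
        simp [hwl, FreeMonoid.toList_of_mul]
      have hlw : w.length = t.length + 1 := by
        have h1 : w.length = (FreeMonoid.toList w).length := rfl
        rw [h1, hwl]; rfl
      have hlt : (FreeMonoid.ofList t).length = t.length := rfl
      have hlen : (FreeMonoid.ofList t).length ≤ n := by omega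
      obtain ⟨a, haM, ha⟩ := ih (FreeMonoid.ofList t) hlen
      have hT := gen_mem_vnAlg N L hL i
      have hb : ∃ b ∈ vnAlg N L,
          b (delta N 1)
            = ContinuousLinearMap.adjoint (L (FreeMonoid.of i)) (delta N (FreeMonoid.ofList t)) := by
        cases t with
        | nil =>
          refine ⟨0, zero_mem _, ?_⟩
          have : (FreeMonoid.ofList ([] : List (Fin N))) = 1 := rfl
          rw [this, adjL_one N L hL]
          simp
        | cons i' t' =>
          have hteq : FreeMonoid.ofList (i' :: t') = FreeMonoid.of i' * FreeMonoid.ofList t' := by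
            apply FreeMonoid.toList.injective
            simp [FreeMonoid.toList_of_mul]
          by_cases hii : i' = i
          · subst hii
            obtain ⟨b, hbM, hbv⟩ := ih (FreeMonoid.ofList t') (by
              have h2 : (FreeMonoid.ofList (i' :: t')).length = t'.length + 1 := rfl
              have h3 : (FreeMonoid.ofList t').length = t'.length := rfl
              omega)
            refine ⟨b, hbM, ?_⟩
            rw [hteq, adjL_cons_same N L hL, hbv]
          · refine ⟨0, zero_mem _, ?_⟩
            rw [hteq, adjL_cons_ne N L hL hii]
            simp
      obtain ⟨b, hbM, hbv⟩ := hb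
      refine ⟨(L (FreeMonoid.of i) + ContinuousLinearMap.adjoint (L (FreeMonoid.of i))) * a - b,
        sub_mem (mul_mem hT haM) hbM, ?_⟩
      rw [ContinuousLinearMap.sub_apply, ContinuousLinearMap.mul_apply, ha,
        ContinuousLinearMap.add_apply, hL, hbv, hweq]
      abel

end adj

/-- The vacuum vector `δ_e` is cyclic for the von Neumann algebra `M` generated by the
semicircular elements: `{a δ_e : a ∈ M}` is dense in `H`. -/
theorem vacuum_vector_cyclic (N : ℕ) (hN : 0 < N)
    (L : FreeMonoid (Fin N) → (FMH N →L[ℂ] FMH N))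
    (hL : ∀ w h : FreeMonoid (Fin N), L w (delta N h) = delta N (w * h)) :
    Dense {x : FMH N | ∃ a ∈ vnAlg N L, a (delta N 1) = x} := by
  let S : Submodule ℂ (FMH N) :=
    { carrier := {x : FMH N | ∃ a ∈ vnAlg N L, a (delta N 1) = x}
      add_mem' := by
        rintro x y ⟨a, ha, rfl⟩ ⟨b, hb, rfl⟩
        exact ⟨a + b, add_mem ha hb, by simp⟩
      zero_mem' := ⟨0, zero_mem _, by simp⟩
      smul_mem' := by
        rintro c x ⟨a, ha, rfl⟩
        exact ⟨c • a, SMulMemClass.smul_mem c ha, by simp⟩ }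
  show Dense (S : Set (FMH N))
  rw [Submodule.dense_iff_topologicalClosure_eq_top,
    Submodule.topologicalClosure_eq_top_iff, Submodule.eq_bot_iff]
  intro x hx
  apply lp.ext
  funext w
  have hmem : delta N w ∈ S := delta_mem_key N L hL w.length w le_rfl
  have h0 : ⟪delta N w, x⟫ = 0 := (Submodule.mem_orthogonal S x).mp hx _ hmem
  rw [inner_delta_left] at h0
  simpa using h0
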